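/- For every integer N ≥ 1, the one-step transition probability function Q(x, [0,u)) = Σ_{i : N/(x+i) < u, i ≥ N} (x+N)/((x+i)(x+i+1)) satisfies ∫_0^1 Q(x,[0,u)) dG_N(x) = G_N([0,u)) for all u ∈ (0,1], where G_N is the measure with density 1/(log((N+1)/N)(x+N)); i.e. G_N is the stationary measure of the associated Markov chain. -/

import Mathlib

open MeasureTheory Filter

noncomputable def GN (N : ℕ) : Measure ℝ :=
  (volume.restrict (Set.Icc (0 : ℝ) 1)).withDensity
    (fun x => ENNReal.ofReal (1 / (Real.log ((N + 1) / N) * (x + N))))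


lemma telescope_hasSum (a b : ℝ) (ha : 0 ≤ a) (hb : 0 < b) :
    HasSum (fun j : ℕ => a / ((b + j) * (b + j + 1))) (a / b) := by
  have key : ∀ j : ℕ, a / ((b + j) * (b + j + 1)) = a / (b + j) - a / (b + j + 1) := by
    intro j
    have h1 : (0:ℝ) < b + j := by positivity
    have h2 : (0:ℝ) < b + j + 1 := by positivity
    field_simp
    ring
  have hnn : ∀ j : ℕ, 0 ≤ a / ((b + j) * (b + j + 1)) := by
    intro j; positivity
  rw [hasSum_iff_tendsto_nat_of_nonneg hnn]
  have hps : ∀ n : ℕ, ∑ j ∈ Finset.range n, a / ((b + j) * (b + j + 1))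
      = a / b - a / (b + n) := by
    intro n
    have := Finset.sum_range_sub' (f := fun j : ℕ => a / (b + j)) n
    simp only [Nat.cast_zero, add_zero] at this
    calc ∑ j ∈ Finset.range n, a / ((b + j) * (b + j + 1))
        = ∑ j ∈ Finset.range n, (a / (b + j) - a / (b + (j+1))) := by
          refine Finset.sum_congr rfl fun j _ => ?_
          rw [key j]; push_cast; ring_nf
      _ = a / b - a / (b + n) := by rw [← this]; apply Finset.sum_congr rfl; intro i _; push_cast; ring_nf
  simp only [hps]
  have h0 : Tendsto (fun n : ℕ => a / (b + n)) atTop (nhds 0) := by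
    apply Tendsto.div_atTop tendsto_const_nhds
    exact tendsto_atTop_add_const_left _ _ tendsto_natCast_atTop_atTop
  have := (tendsto_const_nhds (x := a / b) (f := atTop (α := ℕ))).sub h0
  simpa using this

lemma tail_hasSum (a b : ℝ) (ha : 0 ≤ a) (hb : 0 < b) (k₀ : ℕ) :
    HasSum (fun j : ℕ => if k₀ ≤ j then a / ((b + j) * (b + j + 1)) else 0) (a / (b + k₀)) := by
  have hb' : (0:ℝ) < b + k₀ := by positivity
  have ht := telescope_hasSum a (b + k₀) ha hb'
  have hi : Function.Injective (fun j : ℕ => j + k₀) := add_left_injective k₀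
  rw [← Function.Injective.hasSum_iff hi (f := fun j : ℕ => if k₀ ≤ j then a / ((b + j) * (b + j + 1)) else 0)]
  · convert ht using 2 with j
    simp only [Function.comp_apply]
    rw [if_pos (Nat.le_add_left k₀ j)]
    push_cast
    ring_nf
  · intro m hm
    simp only [Set.mem_range, not_exists] at hm
    have : m < k₀ := by
      by_contra h
      exact hm (m - k₀) (by omega)
    simp [Nat.not_le.mpr this]


lemma Fval (N : ℕ) (hN : 1 ≤ N) (u : ℝ) (hu0 : 0 < u) (hu1 : u ≤ 1)
    (x : ℝ) (hx0 : 0 ≤ x) (hx1 : x ≤ 1)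
    (hxθ : x ≠ (N:ℝ)/u - (⌊(N:ℝ)/u⌋₊:ℝ)) :
    (∑' j : ℕ, if (N : ℝ) / (x + (N + j : ℕ)) < u then
        (x + N) / ((x + (N + j : ℕ)) * (x + (N + j : ℕ) + 1)) else 0)
    = (x + N) / (x + (if x < (N:ℝ)/u - (⌊(N:ℝ)/u⌋₊:ℝ) then (⌊(N:ℝ)/u⌋₊:ℝ) + 1
        else (⌊(N:ℝ)/u⌋₊:ℝ))) := by
  set c := (N:ℝ)/u with hc
  set k := ⌊c⌋₊ with hk
  set θ := c - (k:ℝ) with hθ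
  have hN1 : (1:ℝ) ≤ (N:ℝ) := by exact_mod_cast hN
  have hcN : (N:ℝ) ≤ c := by
    rw [hc, le_div_iff₀ hu0]
    nlinarith
  have hkN : N ≤ k := Nat.le_floor hcN
  have hθ0 : 0 ≤ θ := by
    have := Nat.floor_le (by positivity : (0:ℝ) ≤ c)
    simp only [hθ]; linarith
  have hθ1 : θ < 1 := by
    have := Nat.lt_floor_add_one c
    simp only [hθ]; linarith
  set k₀ : ℕ := if x < θ then k + 1 - N else k - N with hk₀
  have hiff : ∀ j : ℕ, ((N:ℝ) / (x + ((N + j : ℕ):ℝ)) < u ↔ k₀ ≤ j) := by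
    intro j
    have hpos : (0:ℝ) < x + ((N + j : ℕ):ℝ) := by
      push_cast; nlinarith [Nat.cast_nonneg (α := ℝ) j]
    rw [div_lt_iff₀ hpos, ← div_lt_iff₀' hu0, ← hc]
    push_cast
    have hkr : (N:ℝ) ≤ (k:ℝ) := by exact_mod_cast hkN
    constructor
    · intro h
      by_cases hlt : x < θ
      · rw [hk₀, if_pos hlt]
        have hr : (k:ℝ) - N < (j:ℝ) := by simp only [hθ] at hlt; linarith
        have hz : (k:ℤ) - (N:ℤ) < (j:ℤ) := by exact_mod_cast hr
        omega
      · rw [hk₀, if_neg hlt]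
        have hr : (k:ℝ) - N - 1 < (j:ℝ) := by simp only [hθ] at hlt ⊢; push_neg at hlt; linarith
        have hz : (k:ℤ) - (N:ℤ) - 1 < (j:ℤ) := by exact_mod_cast hr
        omega
    · intro h
      by_cases hlt : x < θ
      · rw [hk₀, if_pos hlt] at h
        have hz : (k:ℤ) + 1 - N ≤ (j:ℤ) := by omega
        have hr : (k:ℝ) + 1 - N ≤ (j:ℝ) := by exact_mod_cast hz
        simp only [hθ] at hlt
        linarith
      · rw [hk₀, if_neg hlt] at h
        have hz : (k:ℤ) - N ≤ (j:ℤ) := by omega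
        have hr : (k:ℝ) - N ≤ (j:ℝ) := by exact_mod_cast hz
        have hgt : θ < x := lt_of_le_of_ne (not_lt.mp hlt) (by
          intro hh; exact hxθ hh.symm)
        simp only [hθ] at hgt
        linarith
  have key : (∑' j : ℕ, if (N : ℝ) / (x + (N + j : ℕ)) < u then
        (x + N) / ((x + (N + j : ℕ)) * (x + (N + j : ℕ) + 1)) else 0)
      = (x + N) / ((x + N) + k₀) := by
    have hs := tail_hasSum (x + N) (x + N) (by linarith) (by linarith) k₀
    rw [← hs.tsum_eq]
    apply tsum_congr
    intro j
    rw [if_congr (hiff j) rfl rfl]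
    congr 1 <;> push_cast <;> ring_nf
  rw [key]
  congr 1
  by_cases hlt : x < θ
  · rw [hk₀, if_pos hlt, if_pos hlt]
    have : ((k + 1 - N : ℕ):ℝ) = (k:ℝ) + 1 - N := by
      have : N ≤ k + 1 := by omega
      push_cast [this]; ring
    rw [this]; ring
  · rw [hk₀, if_neg hlt, if_neg hlt]
    have : ((k - N : ℕ):ℝ) = (k:ℝ) - N := by push_cast [hkN]; ring
    rw [this]; ring

theorem GN_stationary (N : ℕ) (hN : 1 ≤ N) (u : ℝ) (hu : u ∈ Set.Ioc (0 : ℝ) 1) :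
    ∫ x, (∑' k : ℕ, if (N : ℝ) / (x + (N + k : ℕ)) < u then
        (x + N) / ((x + (N + k : ℕ)) * (x + (N + k : ℕ) + 1)) else 0) ∂(GN N)
      = (GN N (Set.Ico 0 u)).toReal := by
  obtain ⟨hu0, hu1⟩ := hu
  have hN1 : (1:ℝ) ≤ (N:ℝ) := by exact_mod_cast hN
  have hNpos : (0:ℝ) < N := by linarith
  set L := Real.log (((N:ℝ) + 1) / N) with hL
  have hLpos : 0 < L := Real.log_pos (by rw [lt_div_iff₀ hNpos]; linarith)
  set k := ⌊(N:ℝ)/u⌋₊ with hk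
  set θ := (N:ℝ)/u - (k:ℝ) with hθ
  have hcN : (N:ℝ) ≤ (N:ℝ)/u := by rw [le_div_iff₀ hu0]; nlinarith
  have hkN : N ≤ k := Nat.le_floor hcN
  have hkr : (1:ℝ) ≤ (k:ℝ) := by
    have : (N:ℝ) ≤ (k:ℝ) := by exact_mod_cast hkN
    linarith
  have hθ0 : 0 ≤ θ := by
    have := Nat.floor_le (by positivity : (0:ℝ) ≤ (N:ℝ)/u)
    rw [hθ]; linarith
  have hθ1 : θ < 1 := by
    have := Nat.lt_floor_add_one ((N:ℝ)/u)
    rw [hθ]; linarith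
  -- the simplified integrand
  set G : ℝ → ℝ := fun x =>
    1 / (L * (x + (if x < θ then (k:ℝ) + 1 else (k:ℝ)))) with hG
  -- a.e. facts
  have hne : ∀ᵐ x ∂(volume : Measure ℝ), x ≠ θ := by
    rw [ae_iff]
    have : {a : ℝ | ¬ a ≠ θ} = {θ} := by ext y; simp
    rw [this, Real.volume_singleton]
  -- density rewrite
  have hmeas : Measurable fun x : ℝ => (1 / (L * (x + N))).toNNReal := by
    apply Measurable.real_toNNReal; fun_prop
  have hGN : GN N = (volume.restrict (Set.Icc (0:ℝ) 1)).withDensity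
      (fun x => ((1 / (L * (x + N))).toNNReal : ENNReal)) := by
    rw [GN]; rfl
  rw [hGN, integral_withDensity_eq_integral_smul hmeas]
  -- replace the integrand a.e.
  have hcongr : ∫ x in Set.Icc (0:ℝ) 1, (1 / (L * (x + N))).toNNReal •
      (∑' j : ℕ, if (N : ℝ) / (x + (N + j : ℕ)) < u then
        (x + N) / ((x + (N + j : ℕ)) * (x + (N + j : ℕ) + 1)) else 0)
      = ∫ x in Set.Icc (0:ℝ) 1, G x := by
    apply integral_congr_ae
    filter_upwards [ae_restrict_mem measurableSet_Icc, ae_restrict_of_ae hne]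
      with x hx hxne
    rw [Fval N hN u hu0 hu1 x hx.1 hx.2 (by rw [← hk, ← hθ]; exact hxne)]
    have hxN : (0:ℝ) < x + N := by linarith [hx.1]
    rw [← hk, ← hθ, NNReal.smul_def, Real.coe_toNNReal _ (by positivity : 0 ≤ 1 / (L * (x + N)))]
    have hv : (1:ℝ) ≤ (if x < θ then (k:ℝ) + 1 else (k:ℝ)) := by
      split <;> linarith
    have hxv : (0:ℝ) < x + (if x < θ then (k:ℝ) + 1 else (k:ℝ)) := by linarith [hx.1]
    rw [hG]
    beta_reduce
    generalize (if x < θ then (k:ℝ) + 1 else (k:ℝ)) = v at hv hxv ⊢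
    rw [smul_eq_mul]
    field_simp
  rw [hcongr]
  -- compute the integral of G
  have hiodd : ∫ x in Set.Icc (0:ℝ) 1, G x = ∫ x in (0:ℝ)..1, G x := by
    rw [integral_Icc_eq_integral_Ioc, intervalIntegral.integral_of_le zero_le_one]
  -- integrability pieces
  have hcont1 : ContinuousOn (fun x : ℝ => 1 / (L * (x + ((k:ℝ) + 1)))) (Set.Icc 0 θ) := by
    apply ContinuousOn.div continuousOn_const
    · fun_prop
    · intro x hx
      have : (0:ℝ) < x + ((k:ℝ)+1) := by nlinarith [hx.1]
      positivity
  have hcont2 : ContinuousOn (fun x : ℝ => 1 / (L * (x + (k:ℝ)))) (Set.Icc θ 1) := by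
    apply ContinuousOn.div continuousOn_const
    · fun_prop
    · intro x hx
      have : (0:ℝ) < x + (k:ℝ) := by nlinarith [hx.1]
      positivity
  have hae1 : G =ᵐ[volume.restrict (Set.Ioc 0 θ)] fun x => 1 / (L * (x + ((k:ℝ) + 1))) := by
    filter_upwards [ae_restrict_mem measurableSet_Ioc, ae_restrict_of_ae hne] with x hx hxne
    have : x < θ := lt_of_le_of_ne hx.2 hxne
    rw [hG]; simp only [if_pos this]
  have hae2 : G =ᵐ[volume.restrict (Set.Ioc θ 1)] fun x => 1 / (L * (x + (k:ℝ))) := by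
    filter_upwards [ae_restrict_mem measurableSet_Ioc] with x hx
    have : ¬ x < θ := not_lt.mpr hx.1.le
    rw [hG]; simp only [if_neg this]
  have hi1 : IntervalIntegrable G volume 0 θ := by
    rw [intervalIntegrable_iff, Set.uIoc_of_le hθ0]
    exact (((hcont1.integrableOn_Icc).mono_set Set.Ioc_subset_Icc_self).congr hae1.symm)
  have hi2 : IntervalIntegrable G volume θ 1 := by
    rw [intervalIntegrable_iff, Set.uIoc_of_le hθ1.le]
    exact (((hcont2.integrableOn_Icc).mono_set Set.Ioc_subset_Icc_self).congr hae2.symm)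
  rw [hiodd, ← intervalIntegral.integral_add_adjacent_intervals hi1 hi2]
  -- compute each piece
  have hint : ∀ a b e : ℝ, 0 ≤ a → a ≤ b → 1 ≤ e →
      (∫ x in a..b, 1 / (L * (x + e))) = 1/L * (Real.log (b + e) - Real.log (a + e)) := by
    intro a b e ha hab he
    have h1 : ∀ x : ℝ, 1 / (L * (x + e)) = L⁻¹ * (x + e)⁻¹ := by
      intro x; rw [one_div, mul_inv]
    simp only [h1]
    rw [intervalIntegral.integral_const_mul]
    have h2 : (∫ x in a..b, (x + e)⁻¹) = ∫ x in (a+e)..(b+e), x⁻¹ :=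
      (intervalIntegral.integral_comp_add_right (fun y => y⁻¹) e)
    rw [h2, integral_inv, Real.log_div (by linarith) (by linarith)]
    · ring
    · intro h
      rw [Set.uIcc_of_le (by linarith)] at h
      linarith [h.1]
  have hIG1 : (∫ x in (0:ℝ)..θ, G x) = 1/L * (Real.log (θ + ((k:ℝ)+1)) - Real.log (0 + ((k:ℝ)+1))) := by
    rw [intervalIntegral.integral_of_le hθ0, integral_congr_ae hae1,
      ← intervalIntegral.integral_of_le hθ0]
    exact hint 0 θ ((k:ℝ)+1) le_rfl hθ0 (by linarith)
  have hIG2 : (∫ x in θ..(1:ℝ), G x) = 1/L * (Real.log (1 + (k:ℝ)) - Real.log (θ + (k:ℝ))) := by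
    rw [intervalIntegral.integral_of_le hθ1.le, integral_congr_ae hae2,
      ← intervalIntegral.integral_of_le hθ1.le]
    exact hint θ 1 (k:ℝ) hθ0 hθ1.le hkr
  rw [hIG1, hIG2]
  -- RHS
  have hsub : Set.Ico (0:ℝ) u ⊆ Set.Icc 0 1 := fun x hx => ⟨hx.1, le_trans hx.2.le hu1⟩
  have hcont3 : ContinuousOn (fun x : ℝ => 1 / (L * (x + (N:ℝ)))) (Set.Icc 0 u) := by
    apply ContinuousOn.div continuousOn_const
    · fun_prop
    · intro x hx
      have : (0:ℝ) < x + (N:ℝ) := by nlinarith [hx.1]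
      positivity
  have hInt3 : IntegrableOn (fun x : ℝ => 1 / (L * (x + (N:ℝ)))) (Set.Ico 0 u) volume :=
    (hcont3.integrableOn_Icc).mono_set Set.Ico_subset_Icc_self
  have hnn3 : 0 ≤ᵐ[volume.restrict (Set.Ico (0:ℝ) u)] (fun x : ℝ => 1 / (L * (x + (N:ℝ)))) := by
    filter_upwards [ae_restrict_mem measurableSet_Ico] with x hx
    have : (0:ℝ) < x + N := by linarith [hx.1]
    positivity
  have heq : (fun x : ℝ => ((1 / (L * (x + (N:ℝ)))).toNNReal : ℝ))
      =ᵐ[volume.restrict (Set.Ico (0:ℝ) u)] fun x : ℝ => 1 / (L * (x + (N:ℝ))) := by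
    filter_upwards [hnn3] with x hx
    rw [Real.coe_toNNReal _ hx]
  have hRHS : ((((volume.restrict (Set.Icc (0:ℝ) 1)).withDensity
        (fun x => ((1 / (L * (x + (N:ℝ)))).toNNReal : ENNReal))) (Set.Ico 0 u)).toReal)
      = ∫ x in Set.Ico (0:ℝ) u, 1 / (L * (x + (N:ℝ))) := by
    rw [withDensity_apply _ measurableSet_Ico,
      Measure.restrict_restrict measurableSet_Ico,
      Set.inter_eq_self_of_subset_left hsub,
      lintegral_coe_eq_integral _ (hInt3.congr heq.symm),
      integral_congr_ae heq, ENNReal.toReal_ofReal (integral_nonneg_of_ae hnn3)]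
  rw [hRHS, integral_Ico_eq_integral_Ioo, ← integral_Ioc_eq_integral_Ioo, ← intervalIntegral.integral_of_le hu0.le,
    hint 0 u (N:ℝ) le_rfl hu0.le hN1]
  have hck : θ + (k:ℝ) = (N:ℝ)/u := by rw [hθ]; ring
  have hcpos : (0:ℝ) < (N:ℝ)/u := by positivity
  have h1 : Real.log (θ + ((k:ℝ)+1)) - Real.log (θ + (k:ℝ))
      = Real.log (u + (N:ℝ)) - Real.log ((0:ℝ) + (N:ℝ)) := by
    have e1 : θ + ((k:ℝ)+1) = (N:ℝ)/u + 1 := by rw [hθ]; ring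
    rw [e1, hck, ← Real.log_div (by positivity) (ne_of_gt hcpos),
      ← Real.log_div (by positivity) (by positivity)]
    congr 1
    field_simp
    ring
  have e4 : (0:ℝ) + ((k:ℝ)+1) = 1 + (k:ℝ) := by ring
  rw [e4]
  linear_combination (1/L) * h1
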